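/- arXiv:0911.3787 — 8 statements merged into one kernel-verified Lean document; each statement's English description precedes it below -/
import Mathlib

section
/- For every real-valued random variable Y on a probability space (Ω, 𝓕, P), with F denoting the cumulative distribution function of the law of Y, and for every y ∈ ℝ, the event {ω : F(Y(ω)) = F(y) and Y(ω) > y} has probability zero. -/
open MeasureTheory ProbabilityTheory

/-- For an arbitrary real-valued random variable `Y` with cdf `F`, the event
`{F(Y) = F(y) and Y > y}` has probability zero. -/
theorem stmt1 {Ω : Type*} [MeasurableSpace Ω] (P : Measure Ω) [IsProbabilityMeasure P]
    (Y : Ω → ℝ) (hY : Measurable Y) (y : ℝ) :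
    P {ω | ((P.map Y) (Set.Iic (Y ω))).toReal = ((P.map Y) (Set.Iic y)).toReal ∧ y < Y ω}
      = 0 := by
  set μ := P.map Y with hμ
  have key : ∀ t : ℝ, y < t →
      (((μ (Set.Iic t)).toReal = (μ (Set.Iic y)).toReal) ↔ μ (Set.Ioc y t) = 0) := by
    intro t ht
    have hsplit : μ (Set.Iic t) = μ (Set.Iic y) + μ (Set.Ioc y t) := by
      rw [← measure_union (Set.Iic_disjoint_Ioc le_rfl) measurableSet_Ioc,
        Set.Iic_union_Ioc_eq_Iic ht.le]
    rw [ENNReal.toReal_eq_toReal_iff' (measure_ne_top _ _) (measure_ne_top _ _), hsplit]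
    nth_rewrite 2 [← add_zero (μ (Set.Iic y))]
    exact ENNReal.add_right_inj (measure_ne_top _ _)
  set S : Set ℝ := {t | y < t ∧ μ (Set.Ioc y t) = 0} with hS
  have hEsub : {ω | (μ (Set.Iic (Y ω))).toReal = (μ (Set.Iic y)).toReal ∧ y < Y ω}
      ⊆ Y ⁻¹' S := by
    intro ω hω
    exact ⟨hω.2, (key _ hω.2).mp hω.1⟩
  by_cases hmax : ∃ m ∈ S, ∀ s ∈ S, s ≤ m
  · obtain ⟨m, hmS, hm⟩ := hmax
    have hsub : Y ⁻¹' S ⊆ Y ⁻¹' Set.Ioc y m := fun ω hω => ⟨hω.1, hm _ hω⟩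
    apply measure_mono_null (hEsub.trans hsub)
    have h1 : P (Y ⁻¹' Set.Ioc y m) = μ (Set.Ioc y m) :=
      (Measure.map_apply hY measurableSet_Ioc).symm
    exact h1.trans hmS.2
  · push_neg at hmax
    have hSsub : S ⊆ ⋃ (q : ℚ), ⋃ (_ : μ (Set.Ioc y (q : ℝ)) = 0), Set.Ioc y (q : ℝ) := by
      intro s hs
      obtain ⟨s', hs', hss'⟩ := hmax s hs
      obtain ⟨q, hq1, hq2⟩ := exists_rat_btwn hss'
      refine Set.mem_iUnion.mpr ⟨q, Set.mem_iUnion.mpr ⟨?_, hs.1, hq1.le⟩⟩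
      exact measure_mono_null (Set.Ioc_subset_Ioc_right hq2.le) hs'.2
    apply measure_mono_null (hEsub.trans (Set.preimage_mono hSsub))
    rw [Set.preimage_iUnion]
    apply measure_iUnion_null
    intro q
    rw [Set.preimage_iUnion]
    apply measure_iUnion_null
    intro h
    have h1 : P (Y ⁻¹' Set.Ioc y (q:ℝ)) = μ (Set.Ioc y (q:ℝ)) :=
      (Measure.map_apply hY measurableSet_Ioc).symm
    exact h1.trans h
end

section
/- Let Y and Z be arbitrary real-valued random variables on a common probability space with cumulative distribution functions F_Y and F_Z. Then for every y, z ∈ ℝ: P(Y ≤ y and Z ≤ z) = P(F_Y(Y) ≤ F_Y(y) and F_Z(Z) ≤ F_Z(z)). -/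
/-! A point `t > y` with `F(t) ≤ F(y)` lies in a flat stretch `(y, t]` of the distribution
function, which carries no mass. The set of all such `t` is an interval to the right of `y`, so
every compact subset of it lies in some `(y, m]` with `m` in the set; by inner regularity the
whole set is null. Hence `{t | F(t) ≤ F(y)}` and `(-∞, y]` agree almost everywhere, and pulling
back along `Y` and `Z` gives the identity. -/

open MeasureTheory Set Filter
open scoped ENNReal

section FlatStretch

variable {α : Type*} [LinearOrder α] [TopologicalSpace α] [OrderClosedTopology α]
  [MeasurableSpace α] [BorelSpace α] (μ : Measure α)

theorem measure_Ioc_eq_zero_of_measure_Iic_le {y t : α} (hyt : y ≤ t) (hy : μ (Iic y) ≠ ∞)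
    (h : μ (Iic t) ≤ μ (Iic y)) : μ (Ioc y t) = 0 := by
  have hdiff : Iic t \ Iic y = Ioc y t := by ext; simp [and_comm]
  rw [← hdiff, measure_sdiff (Iic_subset_Iic.2 hyt) measurableSet_Iic.nullMeasurableSet hy]
  exact tsub_eq_zero_of_le h

theorem measure_setOf_lt_and_measure_Iic_le_eq_zero [μ.InnerRegular] {y : α}
    (hy : μ (Iic y) ≠ ∞) : μ {t | y < t ∧ μ (Iic t) ≤ μ (Iic y)} = 0 := by
  set T := {t | y < t ∧ μ (Iic t) ≤ μ (Iic y)}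
  have hT : T.OrdConnected := ⟨fun _ ha _ hb _ hc =>
    ⟨ha.1.trans_le hc.1, (measure_mono (Iic_subset_Iic.2 hc.2)).trans hb.2⟩⟩
  rw [hT.measurableSet.measure_eq_iSup_isCompact]
  refine ENNReal.iSup_eq_zero.2 fun K => ENNReal.iSup_eq_zero.2 fun hKT =>
    ENNReal.iSup_eq_zero.2 fun hK => ?_
  obtain rfl | hne := K.eq_empty_or_nonempty
  · exact measure_empty
  obtain ⟨m, hmK, hmax⟩ := hK.exists_isGreatest hne
  have hKm : K ⊆ Ioc y m := fun t ht => ⟨(hKT ht).1, hmax ht⟩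
  exact measure_mono_null hKm
    (measure_Ioc_eq_zero_of_measure_Iic_le μ (hKT hmK).1.le hy (hKT hmK).2)

theorem setOf_measure_Iic_le_ae_eq_Iic [μ.InnerRegular] {y : α} (hy : μ (Iic y) ≠ ∞) :
    {t | μ (Iic t) ≤ μ (Iic y)} =ᵐ[μ] Iic y := by
  refine ae_eq_set.2 ⟨?_, ?_⟩
  · refine measure_mono_null ?_ (measure_setOf_lt_and_measure_Iic_le_eq_zero μ hy)
    exact fun t ht => ⟨not_le.1 ht.2, ht.1⟩
  · exact measure_mono_null (fun t ht => (ht.2 (measure_mono (Iic_subset_Iic.2 ht.1))).elim)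
      measure_empty

end FlatStretch

theorem setOf_map_Iic_toReal_le_ae_eq {Ω : Type*} [MeasurableSpace Ω] (P : Measure Ω)
    [IsFiniteMeasure P] {X : Ω → ℝ} (hX : AEMeasurable X P) (x : ℝ) :
    {ω | ((P.map X) (Iic (X ω))).toReal ≤ ((P.map X) (Iic x)).toReal} =ᵐ[P] {ω | X ω ≤ x} := by
  simp_rw [ENNReal.toReal_le_toReal (measure_ne_top _ _) (measure_ne_top _ _)]
  exact (setOf_measure_Iic_le_ae_eq_Iic (P.map X) (measure_ne_top _ _)).comp_tendsto
    (Measure.tendsto_ae_map hX)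

/-- For arbitrary real-valued random variables `Y`, `Z` with cdfs `F_Y`, `F_Z`:
`P(Y ≤ y, Z ≤ z) = P(F_Y(Y) ≤ F_Y(y), F_Z(Z) ≤ F_Z(z))`. -/
theorem stmt2 {Ω : Type*} [MeasurableSpace Ω] (P : Measure Ω) [IsProbabilityMeasure P]
    (Y Z : Ω → ℝ) (hY : Measurable Y) (hZ : Measurable Z) (y z : ℝ) :
    P {ω | Y ω ≤ y ∧ Z ω ≤ z} =
      P {ω | ((P.map Y) (Set.Iic (Y ω))).toReal ≤ ((P.map Y) (Set.Iic y)).toReal ∧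
             ((P.map Z) (Set.Iic (Z ω))).toReal ≤ ((P.map Z) (Set.Iic z)).toReal} :=
  measure_congr ((setOf_map_Iic_toReal_le_ae_eq P hY.aemeasurable y).inter
    (setOf_map_Iic_toReal_le_ae_eq P hZ.aemeasurable z)).symm
end

section
/- Let Y and Z be arbitrary real-valued random variables on a common probability space with cumulative distribution functions F_Y and F_Z. If the random variables F_Y(Y) and F_Z(Z) are independent, then Y and Z are independent. -/
/-!
The cdf `F` of `Y` is monotone, so `{F(Y) ≤ F(t)}` contains `{Y ≤ t}`; the difference lies
in the stretch to the right of `t` where `F` stays at `F(t)`, which carries no mass. Hence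
`{F_Y(Y) ≤ F_Y(a)}` and `{F_Z(Z) ≤ F_Z(b)}` agree almost surely with `{Y ≤ a}` and `{Z ≤ b}`,
so the joint cdf of `(Y, Z)` factorizes, which suffices because half-lines generate the
Borel σ-algebra.
-/

open MeasureTheory ProbabilityTheory Set

theorem IsLowerSet.measure_le_of_forall_measure_Iic_le {α : Type*} [LinearOrder α]
    [TopologicalSpace α] [OrderTopology α] [SecondCountableTopology α] [MeasurableSpace α]
    {μ : Measure α} {s : Set α} (hs : IsLowerSet s) {c : ENNReal}
    (h : ∀ y ∈ s, μ (Iic y) ≤ c) : μ s ≤ c := by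
  -- Gives `s` the order topology, so that `atTop` on `s` is countably generated and
  -- continuity from below applies to the family `Iic y`, `y ∈ s`.
  have : s.OrdConnected := hs.ordConnected
  have hs_eq : s = ⋃ y : s, Iic (y : α) :=
    Subset.antisymm (fun y hy => mem_iUnion.2 ⟨⟨y, hy⟩, le_rfl⟩)
      (iUnion_subset fun y => hs.Iic_subset y.2)
  have hmono : Monotone fun y : s => Iic (y : α) := fun _ _ hyz => Iic_subset_Iic.2 hyz
  rw [hs_eq, hmono.measure_iUnion]
  exact iSup_le fun y => h y y.2

theorem ProbabilityTheory.setOf_cdf_le_ae_eq_Iic (μ : Measure ℝ) [IsProbabilityMeasure μ]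
    (t : ℝ) : {y | cdf μ y ≤ cdf μ t} =ᵐ[μ] Iic t := by
  have hsub : Iic t ⊆ {y | cdf μ y ≤ cdf μ t} := fun y hy => (cdf μ).mono hy
  have hle : μ {y | cdf μ y ≤ cdf μ t} ≤ μ (Iic t) := by
    have hlower : IsLowerSet {y | cdf μ y ≤ cdf μ t} := fun _ _ hxy hy =>
      ((cdf μ).mono hxy).trans hy
    refine hlower.measure_le_of_forall_measure_Iic_le fun y hy => ?_
    rw [mem_ofPred_eq, cdf_eq_real, cdf_eq_real, measureReal_def, measureReal_def] at hy
    exact (ENNReal.toReal_le_toReal (measure_ne_top μ _) (measure_ne_top μ _)).1 hy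
  exact (ae_eq_of_subset_of_measure_ge hsub hle measurableSet_Iic.nullMeasurableSet
    (measure_ne_top μ _)).symm

theorem ProbabilityTheory.cdf_comp_preimage_Iic_ae_eq {Ω : Type*} [MeasurableSpace Ω]
    (P : Measure Ω) [IsProbabilityMeasure P] {X : Ω → ℝ} (hX : Measurable X) (t : ℝ) :
    (cdf (P.map X) ∘ X) ⁻¹' Iic (cdf (P.map X) t) =ᵐ[P] X ⁻¹' Iic t := by
  have : IsProbabilityMeasure (P.map X) := Measure.isProbabilityMeasure_map hX.aemeasurable
  exact (hX.quasiMeasurePreserving P).preimage_ae_eq (setOf_cdf_le_ae_eq_Iic (P.map X) t)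

theorem MeasurableSpace.comap_eq_generateFrom_preimage_Iic {Ω α : Type*} [LinearOrder α]
    [TopologicalSpace α] [OrderTopology α] [SecondCountableTopology α] [mα : MeasurableSpace α]
    [BorelSpace α] (X : Ω → α) :
    mα.comap X = generateFrom (preimage X '' range Iic) := by
  rw [BorelSpace.measurable_eq (α := α), borel_eq_generateFrom_Iic, comap_generateFrom]

theorem ProbabilityTheory.indepFun_of_measure_inter_preimage_Iic_eq_mul {Ω α β : Type*}
    [MeasurableSpace Ω] {P : Measure Ω} [IsZeroOrProbabilityMeasure P]
    [LinearOrder α] [TopologicalSpace α] [OrderTopology α] [SecondCountableTopology α]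
    [MeasurableSpace α] [BorelSpace α]
    [LinearOrder β] [TopologicalSpace β] [OrderTopology β] [SecondCountableTopology β]
    [MeasurableSpace β] [BorelSpace β] {X : Ω → α} {Y : Ω → β}
    (hX : Measurable X) (hY : Measurable Y)
    (h : ∀ a b, P (X ⁻¹' Iic a ∩ Y ⁻¹' Iic b) = P (X ⁻¹' Iic a) * P (Y ⁻¹' Iic b)) :
    IndepFun X Y P := by
  refine IndepSets.indep (μ := P) hX.comap_le hY.comap_le
    (isPiSystem_Iic.comap X) (isPiSystem_Iic.comap Y)
    (MeasurableSpace.comap_eq_generateFrom_preimage_Iic X)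
    (MeasurableSpace.comap_eq_generateFrom_preimage_Iic Y) ((IndepSets_iff _ _ _).2 ?_)
  rintro _ _ ⟨_, ⟨a, rfl⟩, rfl⟩ ⟨_, ⟨b, rfl⟩, rfl⟩
  exact h a b

/-- If the probability integral transforms `F_Y(Y)` and `F_Z(Z)` are independent,
then `Y` and `Z` are independent. -/
theorem stmt3 {Ω : Type*} [MeasurableSpace Ω] (P : Measure Ω) [IsProbabilityMeasure P]
    (Y Z : Ω → ℝ) (hY : Measurable Y) (hZ : Measurable Z)
    (hindep : IndepFun (fun ω => ((P.map Y) (Set.Iic (Y ω))).toReal)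
      (fun ω => ((P.map Z) (Set.Iic (Z ω))).toReal) P) :
    IndepFun Y Z P := by
  have hcdf {X : Ω → ℝ} (hX : Measurable X) :
      (fun ω => ((P.map X) (Iic (X ω))).toReal) = cdf (P.map X) ∘ X := by
    have : IsProbabilityMeasure (P.map X) := Measure.isProbabilityMeasure_map hX.aemeasurable
    ext ω
    simp [cdf_eq_real, measureReal_def]
  rw [hcdf hY, hcdf hZ] at hindep
  refine indepFun_of_measure_inter_preimage_Iic_eq_mul hY hZ fun a b => ?_
  have hY_ae := cdf_comp_preimage_Iic_ae_eq P hY a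
  have hZ_ae := cdf_comp_preimage_Iic_ae_eq P hZ b
  rw [← measure_congr (hY_ae.inter hZ_ae), ← measure_congr hY_ae, ← measure_congr hZ_ae]
  exact hindep.measure_inter_preimage_eq_mul _ _ measurableSet_Iic measurableSet_Iic
end

section
/- Let Y and Z be real-valued random variables on a common probability space whose marginal laws are atomless, with cumulative distribution functions F_Y and F_Z, and set Ỹ = F_Y(Y) and Z̃ = F_Z(Z). Then Y and Z are independent if and only if E[γ_z^⊥(Z̃)·γ_y^⊥(Ỹ)] = 0 for all (y,z) ∈ [0,1]². -/
/-!
`Ỹ = F_Y(Y)` and `Z̃ = F_Z(Z)` are uniform on `[0,1]`, and the events `{Y ≤ a}` and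
`{Ỹ ≤ F_Y(a)}` agree almost surely, so `Y ⊥ Z` iff `Ỹ ⊥ Z̃`. For a uniform `U`,
`E[γ_y^⊥(U)] = y·E[e^{yU}] − (e^y − 1) = 0`, hence `E[γ_z^⊥(Z̃)·γ_y^⊥(Ỹ)]` is `zy` times the
covariance of `e^{yỸ}` and `e^{zZ̃}`. Independence makes it vanish. Conversely, if it vanishes
on `[0,1]²`, then `J(w,v) = E[exp(wỸ + vZ̃)]`, which is entire in each variable separately,
satisfies `J(w,v) = J(w,0)·J(0,v)` on `[0,1]²`, hence everywhere by the identity theorem; at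
imaginary arguments this says that the joint characteristic function of `(Ỹ, Z̃)` factorizes.
-/

open MeasureTheory ProbabilityTheory

/-- `γ_z^⊥(t) = z·exp(t·z) − (exp(z) − 1)`. -/
noncomputable def gammaPerp (z t : ℝ) : ℝ := z * Real.exp (t * z) - (Real.exp z - 1)

open Set Filter Topology Complex

section CDF

variable {μ : Measure ℝ} [IsProbabilityMeasure μ] [NullSingletonClass μ]

lemma continuous_cdf : Continuous (cdf μ) := by
  refine continuous_iff_continuousAt.2 fun x ↦
    (monotone_cdf μ).continuousAt_iff_leftLim_eq_rightLim.2 ?_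
  have h := (cdf μ).measure_singleton x
  rw [measure_cdf, measure_singleton, eq_comm, ENNReal.ofReal_eq_zero, sub_nonpos] at h
  rw [(cdf μ).rightLim_eq]
  exact le_antisymm ((monotone_cdf μ).leftLim_le le_rfl) h

lemma measure_cdf_preimage_Iic {u : ℝ} (hu : u ∈ Ico (0 : ℝ) 1) :
    μ (cdf μ ⁻¹' Iic u) = ENNReal.ofReal u := by
  set T := cdf μ ⁻¹' Iic u
  rcases T.eq_empty_or_nonempty with hT | hT
  · obtain rfl : 0 = u := hu.1.eq_or_lt.resolve_right fun hu0 ↦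
      let ⟨x, hx⟩ := ((tendsto_cdf_atBot μ).eventually (gt_mem_nhds hu0)).exists
      hT.subset (show x ∈ T from hx.le)
    simp [hT]
  have hbdd : BddAbove T := by
    obtain ⟨b, hb⟩ := ((tendsto_cdf_atTop μ).eventually (lt_mem_nhds hu.2)).exists
    exact ⟨b, fun x hx ↦ le_of_not_gt fun hbx ↦ (hb.trans_le (monotone_cdf μ hbx.le)).not_ge hx⟩
  have hc : sSup T ∈ T := (isClosed_Iic.preimage continuous_cdf).csSup_mem hT hbdd
  have hT_eq : T = Iic (sSup T) :=
    Subset.antisymm (fun x hx ↦ le_csSup hbdd hx) fun x hx ↦ (monotone_cdf μ hx).trans hc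
  have hcu : cdf μ (sSup T) = u := by
    refine le_antisymm hc (not_lt.1 fun hlt ↦ ?_)
    obtain ⟨x, hxu, hcx⟩ := ((continuous_cdf.tendsto _ |>.eventually (gt_mem_nhds hlt)).filter_mono
      nhdsWithin_le_nhds |>.and (self_mem_nhdsWithin (s := Ioi (sSup T)))).exists
    exact (le_csSup hbdd (show x ∈ T from hxu.le)).not_gt hcx
  rw [hT_eq, ← ofReal_cdf, hcu]

lemma map_cdf_eq_volume_restrict_Icc : μ.map (cdf μ) = volume.restrict (Icc 0 1) := by
  have := Measure.isProbabilityMeasure_map (μ := μ) (continuous_cdf (μ := μ)).aemeasurable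
  refine Measure.ext_of_Iic _ _ fun u ↦ ?_
  rw [Measure.map_apply continuous_cdf.measurable measurableSet_Iic,
    Measure.restrict_apply measurableSet_Iic]
  rcases lt_or_ge u 0 with hu0 | hu0
  · have h1 : cdf μ ⁻¹' Iic u = ∅ :=
      eq_empty_of_forall_notMem fun x hx ↦ hu0.not_ge ((cdf_nonneg μ x).trans hx)
    have h2 : Iic u ∩ Icc (0 : ℝ) 1 = ∅ :=
      eq_empty_of_forall_notMem fun x hx ↦ hu0.not_ge (hx.2.1.trans hx.1)
    simp [h1, h2]
  rcases lt_or_ge u 1 with hu1 | hu1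
  · rw [measure_cdf_preimage_Iic ⟨hu0, hu1⟩,
      show Iic u ∩ Icc (0 : ℝ) 1 = Icc 0 u by grind, Real.volume_Icc, sub_zero]
  · have h1 : cdf μ ⁻¹' Iic u = univ := eq_univ_of_forall fun x ↦ (cdf_le_one μ x).trans hu1
    rw [h1, inter_eq_right.2 fun x hx ↦ hx.2.trans hu1]
    simp

lemma Iic_ae_eq_cdf_preimage (a : ℝ) : Iic a =ᵐ[μ] cdf μ ⁻¹' Iic (cdf μ a) := by
  refine ae_eq_of_subset_of_measure_ge (fun x hx ↦ monotone_cdf μ hx) ?_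
    measurableSet_Iic.nullMeasurableSet (measure_ne_top _ _)
  calc μ (cdf μ ⁻¹' Iic (cdf μ a))
      = volume (Iic (cdf μ a) ∩ Icc 0 1) := by
        rw [← Measure.map_apply continuous_cdf.measurable measurableSet_Iic,
          map_cdf_eq_volume_restrict_Icc, Measure.restrict_apply measurableSet_Iic]
    _ ≤ volume (Icc 0 (cdf μ a)) := measure_mono fun x hx ↦ ⟨hx.2.1, hx.1⟩
    _ = μ (Iic a) := by rw [Real.volume_Icc, sub_zero, ofReal_cdf]

end CDF

lemma eq_of_eventuallyEq_ofReal {f g : ℂ → ℂ} (hf : Differentiable ℂ f) (hg : Differentiable ℂ g)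
    {x₀ : ℝ} (h : ∀ᶠ x : ℝ in 𝓝 x₀, f x = g x) : f = g := by
  refine (analyticOnNhd_univ_iff_differentiable.2 hf).eq_of_frequently_eq
    (analyticOnNhd_univ_iff_differentiable.2 hg) (z₀ := x₀) ?_
  have hmap : Tendsto ((↑) : ℝ → ℂ) (𝓝[≠] x₀) (𝓝[≠] (x₀ : ℂ)) :=
    continuous_ofReal.continuousWithinAt.tendsto_nhdsWithin fun _ ↦ by simp
  exact hmap.frequently (eventually_nhdsWithin_of_eventually_nhds h).frequently

lemma eq_mul_of_forall_mem_Icc {F : ℂ → ℂ → ℂ} (hF₁ : ∀ v, Differentiable ℂ (F · v))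
    (hF₂ : ∀ w, Differentiable ℂ (F w ·))
    (h : ∀ y ∈ Icc (0 : ℝ) 1, ∀ z ∈ Icc (0 : ℝ) 1, F y z = F y 0 * F 0 z) (w v : ℂ) :
    F w v = F w 0 * F 0 v := by
  have hIcc : ∀ᶠ x : ℝ in 𝓝 (1 / 2), x ∈ Icc (0 : ℝ) 1 := Icc_mem_nhds (by norm_num) (by norm_num)
  have hreal (z : ℝ) (hz : z ∈ Icc (0 : ℝ) 1) : (F · z) = (F · 0 * F 0 z) :=
    eq_of_eventuallyEq_ofReal (hF₁ z) ((hF₁ 0).mul_const _) (hIcc.mono fun y hy ↦ h y hy z hz)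
  exact congrFun (eq_of_eventuallyEq_ofReal (hF₂ w) ((hF₂ 0).const_mul _)
    (hIcc.mono fun z hz ↦ congrFun (hreal z hz) w)) v

lemma norm_cexp_le_of_mem_Icc (w v : ℂ) {s t : ℝ} (hs : s ∈ Icc (0 : ℝ) 1)
    (ht : t ∈ Icc (0 : ℝ) 1) : ‖cexp (w * s + v * t)‖ ≤ Real.exp (‖w‖ + ‖v‖) := by
  rw [norm_exp, Real.exp_le_exp]
  have hw := (abs_le.1 (abs_re_le_norm w)).2
  have hv := (abs_le.1 (abs_re_le_norm v)).2
  simp only [add_re, mul_re, ofReal_re, ofReal_im, mul_zero, sub_zero]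
  nlinarith [hs.1, hs.2, ht.1, ht.2, norm_nonneg w, norm_nonneg v]

@[fun_prop]
lemma continuous_gammaPerp (c : ℝ) : Continuous (gammaPerp c) := by
  unfold gammaPerp; fun_prop

lemma integral_gammaPerp_Icc (c : ℝ) : ∫ t in Icc (0 : ℝ) 1, gammaPerp c t = 0 := by
  have hderiv (t : ℝ) : HasDerivAt (fun t ↦ Real.exp (t * c) - t * (Real.exp c - 1))
      (gammaPerp c t) t := by
    refine ((hasDerivAt_mul_const c).exp.sub (hasDerivAt_mul_const _)).congr_deriv ?_
    rw [gammaPerp, mul_comm]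
  rw [integral_Icc_eq_integral_Ioc, ← intervalIntegral.integral_of_le zero_le_one,
    intervalIntegral.integral_eq_sub_of_hasDerivAt (fun t _ ↦ hderiv t)
      ((continuous_gammaPerp c).intervalIntegrable 0 1)]
  simp

section RandomVariables

variable {Ω : Type*} [MeasurableSpace Ω] {P : Measure Ω} {U V : Ω → ℝ}

lemma integral_gammaPerp_comp (hU : AEMeasurable U P)
    (hlaw : P.map U = volume.restrict (Icc 0 1)) (c : ℝ) :
    ∫ ω, gammaPerp c (U ω) ∂P = 0 := by
  rw [← integral_map hU (continuous_gammaPerp c).aestronglyMeasurable, hlaw,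
    integral_gammaPerp_Icc]

lemma memLp_comp_of_ae_mem_Icc [IsFiniteMeasure P] {φ : ℝ → ℝ} (hφ : Continuous φ)
    (hU : AEMeasurable U P) (hUI : ∀ᵐ ω ∂P, U ω ∈ Icc (0 : ℝ) 1) (p : ENNReal) :
    MemLp (fun ω ↦ φ (U ω)) p P := by
  obtain ⟨C, hC⟩ := isCompact_Icc.exists_bound_of_continuousOn hφ.continuousOn
  exact .of_bound (hφ.measurable.comp_aemeasurable hU).aestronglyMeasurable C
    (hUI.mono fun ω hω ↦ hC _ hω)

lemma differentiable_integral_cexp [IsFiniteMeasure P] (hU : AEMeasurable U P)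
    (hV : AEMeasurable V P) (hUI : ∀ᵐ ω ∂P, U ω ∈ Icc (0 : ℝ) 1)
    (hVI : ∀ᵐ ω ∂P, V ω ∈ Icc (0 : ℝ) 1) (v : ℂ) :
    Differentiable ℂ fun w : ℂ ↦ ∫ ω, cexp (w * U ω + v * V ω) ∂P := by
  have hmeas (w : ℂ) : AEStronglyMeasurable (fun ω ↦ cexp (w * U ω + v * V ω)) P := by
    fun_prop
  intro w₀
  refine (hasDerivAt_integral_of_dominated_loc_of_deriv_le (Metric.ball_mem_nhds w₀ one_pos)
    (.of_forall hmeas) ?_ (F' := fun w ω ↦ cexp (w * U ω + v * V ω) * U ω) (by fun_prop)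
    (bound := fun _ ↦ Real.exp (‖w₀‖ + 1 + ‖v‖)) ?_ (integrable_const _) ?_).2.differentiableAt
  · refine (integrable_const (Real.exp (‖w₀‖ + ‖v‖))).mono' (hmeas w₀) ?_
    filter_upwards [hUI, hVI] with ω hUω hVω
    exact norm_cexp_le_of_mem_Icc w₀ v hUω hVω
  · filter_upwards [hUI, hVI] with ω hUω hVω w hw
    have hw' : ‖w‖ ≤ ‖w₀‖ + 1 := by
      have := norm_le_norm_add_norm_sub' w w₀
      rw [Metric.mem_ball, dist_eq_norm] at hw
      linarith
    have hUω' : ‖(U ω : ℂ)‖ ≤ 1 := by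
      rw [norm_real, Real.norm_of_nonneg hUω.1]; exact hUω.2
    calc ‖cexp (w * U ω + v * V ω) * U ω‖ ≤ Real.exp (‖w‖ + ‖v‖) * 1 := by
          rw [norm_mul]
          exact mul_le_mul (norm_cexp_le_of_mem_Icc w v hUω hVω) hUω' (norm_nonneg _)
            (Real.exp_pos _).le
      _ ≤ Real.exp (‖w₀‖ + 1 + ‖v‖) := by
          rw [mul_one, Real.exp_le_exp]; linarith
  · filter_upwards with ω w _
    simpa using (((hasDerivAt_id w).mul_const (U ω : ℂ)).add_const (v * V ω)).cexp

lemma indepFun_of_integral_cexp_mul_I [IsFiniteMeasure P] (hU : AEMeasurable U P)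
    (hV : AEMeasurable V P) (h : ∀ s t : ℝ, ∫ ω, cexp ((s * U ω + t * V ω) * I) ∂P =
      (∫ ω, cexp (s * U ω * I) ∂P) * ∫ ω, cexp (t * V ω * I) ∂P) :
    IndepFun U V P := by
  rw [indepFun_iff_charFun_prod hU hV]
  intro t
  simp only [charFun_apply]
  rw [integral_map (by fun_prop) (by fun_prop), integral_map hU (by fun_prop),
    integral_map hV (by fun_prop)]
  convert h t.ofLp.1 t.ofLp.2 using 3 <;> simp [WithLp.prod_inner_apply]

variable [IsProbabilityMeasure P]

lemma integral_gammaPerp_mul_gammaPerp (hU : AEMeasurable U P) (hV : AEMeasurable V P)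
    (hUI : ∀ᵐ ω ∂P, U ω ∈ Icc (0 : ℝ) 1) (hVI : ∀ᵐ ω ∂P, V ω ∈ Icc (0 : ℝ) 1) {y : ℝ}
    (hy : ∫ ω, gammaPerp y (U ω) ∂P = 0) (z : ℝ) :
    ∫ ω, gammaPerp z (V ω) * gammaPerp y (U ω) ∂P =
      z * y * cov[fun ω ↦ Real.exp (U ω * y), fun ω ↦ Real.exp (V ω * z); P] := by
  have hmemU (φ : ℝ → ℝ) (hφ : Continuous φ) := memLp_comp_of_ae_mem_Icc hφ hU hUI 2
  have hmemV (φ : ℝ → ℝ) (hφ : Continuous φ) := memLp_comp_of_ae_mem_Icc hφ hV hVI 2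
  calc ∫ ω, gammaPerp z (V ω) * gammaPerp y (U ω) ∂P
      = cov[fun ω ↦ gammaPerp z (V ω), fun ω ↦ gammaPerp y (U ω); P] := by
        rw [covariance_eq_sub (hmemV _ (continuous_gammaPerp z))
          (hmemU _ (continuous_gammaPerp y)), hy, mul_zero, sub_zero]
        rfl
    _ = _ := by
        simp only [gammaPerp, sub_eq_add_neg]
        rw [covariance_add_const_left, covariance_add_const_right, covariance_const_mul_left,
          covariance_const_mul_right, covariance_comm, mul_assoc]
        · exact (hmemU (fun t ↦ Real.exp (t * y)) (by fun_prop)).integrable one_le_two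
            |>.const_mul y
        · exact (hmemV (fun t ↦ Real.exp (t * z)) (by fun_prop)).integrable one_le_two
            |>.const_mul z

lemma indepFun_of_covariance_exp_eq_zero (hU : AEMeasurable U P) (hV : AEMeasurable V P)
    (hUI : ∀ᵐ ω ∂P, U ω ∈ Icc (0 : ℝ) 1) (hVI : ∀ᵐ ω ∂P, V ω ∈ Icc (0 : ℝ) 1)
    (h : ∀ y ∈ Icc (0 : ℝ) 1, ∀ z ∈ Icc (0 : ℝ) 1,
      cov[fun ω ↦ Real.exp (U ω * y), fun ω ↦ Real.exp (V ω * z); P] = 0) :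
    IndepFun U V P := by
  set F : ℂ → ℂ → ℂ := fun w v ↦ ∫ ω, cexp (w * U ω + v * V ω) ∂P
  have hF_real (y z : ℝ) : F y z = ↑(∫ ω, Real.exp (U ω * y) * Real.exp (V ω * z) ∂P) := by
    refine (integral_congr_ae (.of_forall fun ω ↦ ?_)).trans integral_complex_ofReal
    push_cast
    rw [← Complex.exp_add, mul_comm (y : ℂ), mul_comm (z : ℂ)]
  have hF₂ (w : ℂ) : Differentiable ℂ (F w ·) := by
    simpa only [F, add_comm] using differentiable_integral_cexp hV hU hVI hUI w
  have hF_Icc : ∀ y ∈ Icc (0 : ℝ) 1, ∀ z ∈ Icc (0 : ℝ) 1, F y z = F y 0 * F 0 z := by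
    intro y hy z hz
    have hcov := h y hy z hz
    rw [covariance_eq_sub (memLp_comp_of_ae_mem_Icc (φ := fun t ↦ Real.exp (t * y))
      (by fun_prop) hU hUI 2) (memLp_comp_of_ae_mem_Icc (φ := fun t ↦ Real.exp (t * z))
      (by fun_prop) hV hVI 2), sub_eq_zero] at hcov
    rw [← ofReal_zero, hF_real, hF_real, hF_real]
    simp only [mul_zero, Real.exp_zero, mul_one, one_mul]
    exact_mod_cast hcov
  have hfactor := eq_mul_of_forall_mem_Icc (differentiable_integral_cexp hU hV hUI hVI) hF₂ hF_Icc
  refine indepFun_of_integral_cexp_mul_I hU hV fun s t ↦ ?_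
  convert hfactor (s * I) (t * I) using 2 <;>
    simp only [zero_mul, add_zero, zero_add, add_mul, mul_right_comm _ I _]

theorem indepFun_iff_integral_gammaPerp_mul_eq_zero (hU : AEMeasurable U P)
    (hV : AEMeasurable V P) (hUlaw : P.map U = volume.restrict (Icc 0 1))
    (hVlaw : P.map V = volume.restrict (Icc 0 1)) :
    IndepFun U V P ↔ ∀ y ∈ Icc (0 : ℝ) 1, ∀ z ∈ Icc (0 : ℝ) 1,
      ∫ ω, gammaPerp z (V ω) * gammaPerp y (U ω) ∂P = 0 := by
  have hUI : ∀ᵐ ω ∂P, U ω ∈ Icc (0 : ℝ) 1 :=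
    ae_of_ae_map hU (hUlaw ▸ ae_restrict_mem measurableSet_Icc)
  have hVI : ∀ᵐ ω ∂P, V ω ∈ Icc (0 : ℝ) 1 :=
    ae_of_ae_map hV (hVlaw ▸ ae_restrict_mem measurableSet_Icc)
  refine ⟨fun h y _ z _ ↦ ?_, fun h ↦ indepFun_of_covariance_exp_eq_zero hU hV hUI hVI
    fun y hy z hz ↦ ?_⟩
  · have hind := h.symm.comp (continuous_gammaPerp z).measurable
      (continuous_gammaPerp y).measurable
    rw [Function.comp_def, Function.comp_def] at hind
    rw [hind.integral_fun_mul_eq_mul_integral (by fun_prop) (by fun_prop),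
      integral_gammaPerp_comp hV hVlaw, zero_mul]
  · have hzy := h y hy z hz
    rw [integral_gammaPerp_mul_gammaPerp hU hV hUI hVI (integral_gammaPerp_comp hU hUlaw y)] at hzy
    rcases mul_eq_zero.1 hzy with hzy | hcov
    · rcases mul_eq_zero.1 hzy with rfl | rfl <;> simp
    · exact hcov

lemma indepFun_of_measure_inter_preimage_Iic {Y Z : Ω → ℝ} (hY : Measurable Y)
    (hZ : Measurable Z)
    (h : ∀ a b, P (Y ⁻¹' Iic a ∩ Z ⁻¹' Iic b) = P (Y ⁻¹' Iic a) * P (Z ⁻¹' Iic b)) :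
    IndepFun Y Z P := by
  have hgen (X : Ω → ℝ) : MeasurableSpace.comap X inferInstance =
      MeasurableSpace.generateFrom {s | ∃ t ∈ range Iic, X ⁻¹' t = s} := by
    rw [BorelSpace.measurable_eq (α := ℝ), borel_eq_generateFrom_Iic,
      MeasurableSpace.comap_generateFrom]
    rfl
  refine IndepSets.indep hY.comap_le hZ.comap_le (isPiSystem_Iic.comap Y)
    (isPiSystem_Iic.comap Z) (hgen Y) (hgen Z) ((IndepSets_iff _ _ _).2 ?_)
  rintro _ _ ⟨_, ⟨a, rfl⟩, rfl⟩ ⟨_, ⟨b, rfl⟩, rfl⟩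
  exact h a b

variable {Y Z : Ω → ℝ} [NullSingletonClass (P.map Y)] [NullSingletonClass (P.map Z)]

lemma map_cdf_comp_eq_volume_restrict_Icc (hY : AEMeasurable Y P) :
    P.map (fun ω ↦ cdf (P.map Y) (Y ω)) = volume.restrict (Icc 0 1) := by
  have := Measure.isProbabilityMeasure_map hY
  change P.map (cdf (P.map Y) ∘ Y) = _
  rw [← AEMeasurable.map_map_of_aemeasurable continuous_cdf.aemeasurable hY,
    map_cdf_eq_volume_restrict_Icc]

lemma indepFun_iff_indepFun_cdf_comp (hY : Measurable Y) (hZ : Measurable Z) :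
    IndepFun Y Z P ↔
      IndepFun (fun ω ↦ cdf (P.map Y) (Y ω)) (fun ω ↦ cdf (P.map Z) (Z ω)) P := by
  have := Measure.isProbabilityMeasure_map (μ := P) hY.aemeasurable
  have := Measure.isProbabilityMeasure_map (μ := P) hZ.aemeasurable
  refine ⟨fun h ↦ h.comp continuous_cdf.measurable continuous_cdf.measurable, fun h ↦
    indepFun_of_measure_inter_preimage_Iic hY hZ fun a b ↦ ?_⟩
  have hYa : Y ⁻¹' Iic a =ᵐ[P] Y ⁻¹' (cdf (P.map Y) ⁻¹' Iic (cdf (P.map Y) a)) :=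
    ae_of_ae_map hY.aemeasurable (Iic_ae_eq_cdf_preimage a)
  have hZb : Z ⁻¹' Iic b =ᵐ[P] Z ⁻¹' (cdf (P.map Z) ⁻¹' Iic (cdf (P.map Z) b)) :=
    ae_of_ae_map hZ.aemeasurable (Iic_ae_eq_cdf_preimage b)
  rw [measure_congr (hYa.inter hZb), measure_congr hYa, measure_congr hZb]
  exact h.measure_inter_preimage_eq_mul _ _ measurableSet_Iic measurableSet_Iic

end RandomVariables

/-- For random variables `Y`, `Z` with atomless marginal laws, independence of `Y` and `Z`
is equivalent to `E[γ_z^⊥(Z̃)·γ_y^⊥(Ỹ)] = 0` for all `(y,z) ∈ [0,1]²`, where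
`Ỹ = F_Y(Y)` and `Z̃ = F_Z(Z)` are the probability integral transforms. -/
theorem stmt4 {Ω : Type*} [MeasurableSpace Ω] (P : Measure Ω) [IsProbabilityMeasure P]
    (Y Z : Ω → ℝ) (hY : Measurable Y) (hZ : Measurable Z)
    (hYatomless : ∀ a : ℝ, (P.map Y) {a} = 0)
    (hZatomless : ∀ a : ℝ, (P.map Z) {a} = 0) :
    IndepFun Y Z P ↔
      ∀ y ∈ Set.Icc (0:ℝ) 1, ∀ z ∈ Set.Icc (0:ℝ) 1,
        ∫ ω, gammaPerp z (((P.map Z) (Set.Iic (Z ω))).toReal) *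
             gammaPerp y (((P.map Y) (Set.Iic (Y ω))).toReal) ∂P = 0 := by
  have : NullSingletonClass (P.map Y) := ⟨hYatomless⟩
  have : NullSingletonClass (P.map Z) := ⟨hZatomless⟩
  have := Measure.isProbabilityMeasure_map (μ := P) hY.aemeasurable
  have := Measure.isProbabilityMeasure_map (μ := P) hZ.aemeasurable
  simp_rw [← measureReal_def, ← cdf_eq_real]
  rw [indepFun_iff_indepFun_cdf_comp hY hZ]
  exact indepFun_iff_integral_gammaPerp_mul_eq_zero
    (continuous_cdf.measurable.comp hY).aemeasurable
    (continuous_cdf.measurable.comp hZ).aemeasurable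
    (map_cdf_comp_eq_volume_restrict_Icc hY.aemeasurable)
    (map_cdf_comp_eq_volume_restrict_Icc hZ.aemeasurable)
end

section
/- Let g : [0,1]² → ℝ be integrable with respect to Lebesgue measure on [0,1]². If ∫_{[0,1]²} exp(z·t₁ + y·t₂)·g(t₁,t₂) d(t₁,t₂) = 0 for every (z,y) ∈ (0,1)², then g = 0 almost everywhere on [0,1]². -/
/-!
Differentiating `F(z, y) = ∫ exp(z t₁ + y t₂) g` under the integral sign (legitimate because the
weights are bounded on the square) shows that `∂ᵐ_z ∂ⁿ_y F = ∫ t₁ᵐ t₂ⁿ exp(z t₁ + y t₂) g`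
vanishes on the open square. At `z = y = 1/2` this says that `G = exp((t₁ + t₂)/2) g` has
vanishing polynomial moments. Polynomials are dense in `C([0,1]², ℝ)` by Stone–Weierstrass and
`f ↦ ∫ f G` is continuous for the sup norm, so `∫ f G = 0` for every continuous `f`, which
forces `G = 0`, hence `g = 0`, a.e.
-/

open MeasureTheory Set Filter

section ExponentialMoments

variable {α : Type*} [MeasurableSpace α] {μ : Measure α} {c h : α → ℝ} {C : ℝ}

lemma integrable_exp_mul_mul (hc : AEStronglyMeasurable c μ) (hcC : ∀ᵐ x ∂μ, |c x| ≤ C)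
    (hh : Integrable h μ) (z : ℝ) : Integrable (fun x => Real.exp (z * c x) * h x) μ := by
  refine hh.bdd_mul (c := Real.exp (|z| * C))
    (Real.continuous_exp.comp_aestronglyMeasurable (hc.const_mul z)) ?_
  filter_upwards [hcC] with x hx
  rw [Real.norm_of_nonneg (Real.exp_pos _).le, Real.exp_le_exp]
  calc z * c x ≤ |z| * |c x| := (le_abs_self _).trans (abs_mul _ _).le
    _ ≤ |z| * C := by gcongr

lemma integrable_pow_mul (hc : AEStronglyMeasurable c μ) (hcC : ∀ᵐ x ∂μ, |c x| ≤ C)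
    (hh : Integrable h μ) (n : ℕ) : Integrable (fun x => c x ^ n * h x) μ := by
  refine hh.bdd_mul (c := C ^ n) (hc.pow n) ?_
  filter_upwards [hcC] with x hx
  rw [norm_pow, Real.norm_eq_abs]
  exact pow_le_pow_left₀ (abs_nonneg _) hx n

lemma hasDerivAt_integral_exp_mul_mul (hc : AEStronglyMeasurable c μ)
    (hcC : ∀ᵐ x ∂μ, |c x| ≤ C) (hh : Integrable h μ) (z₀ : ℝ) :
    HasDerivAt (fun z => ∫ x, Real.exp (z * c x) * h x ∂μ)
      (∫ x, Real.exp (z₀ * c x) * (c x * h x) ∂μ) z₀ := by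
  have hbound : ∀ᵐ x ∂μ, ∀ z ∈ Metric.ball z₀ 1,
      ‖Real.exp (z * c x) * (c x * h x)‖ ≤ Real.exp ((|z₀| + 1) * C) * (C * ‖h x‖) := by
    filter_upwards [hcC] with x hx z hz
    have hz' : |z| ≤ |z₀| + 1 := by
      have := abs_sub_abs_le_abs_sub z z₀
      rw [Metric.mem_ball, Real.dist_eq] at hz
      linarith
    rw [norm_mul, norm_mul, Real.norm_of_nonneg (Real.exp_pos _).le, Real.norm_eq_abs]
    have hexp : z * c x ≤ (|z₀| + 1) * C :=
      calc z * c x ≤ |z| * |c x| := (le_abs_self _).trans (abs_mul _ _).le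
        _ ≤ (|z₀| + 1) * C := by gcongr
    gcongr
  refine (hasDerivAt_integral_of_dominated_loc_of_deriv_le (Metric.ball_mem_nhds z₀ one_pos)
    (Eventually.of_forall fun z => (integrable_exp_mul_mul hc hcC hh z).aestronglyMeasurable)
    (integrable_exp_mul_mul hc hcC hh z₀)
    (by simpa using (integrable_exp_mul_mul hc hcC (integrable_pow_mul hc hcC hh 1) z₀).1)
    hbound ((hh.norm.const_mul C).const_mul _) (Eventually.of_forall fun x z _ => ?_)).2
  exact (((hasDerivAt_id' z).mul_const (c x)).exp.mul_const (h x)).congr_deriv (by ring)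

lemma integral_exp_mul_pow_mul_eq_zero (hc : AEStronglyMeasurable c μ)
    (hcC : ∀ᵐ x ∂μ, |c x| ≤ C) (hh : Integrable h μ) {U : Set ℝ} (hU : IsOpen U)
    (h0 : ∀ z ∈ U, ∫ x, Real.exp (z * c x) * h x ∂μ = 0) (n : ℕ) :
    ∀ z ∈ U, ∫ x, Real.exp (z * c x) * (c x ^ n * h x) ∂μ = 0 := by
  induction n with
  | zero => simpa using h0
  | succ n ih =>
    intro z hz
    have hderiv_zero : HasDerivAt (fun z => ∫ x, Real.exp (z * c x) * (c x ^ n * h x) ∂μ) 0 z :=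
      (hasDerivAt_const z 0).congr_of_eventuallyEq (eventuallyEq_of_mem (hU.mem_nhds hz) ih)
    simpa only [pow_succ', mul_assoc] using
      (hasDerivAt_integral_exp_mul_mul hc hcC (integrable_pow_mul hc hcC hh n) z).unique
        hderiv_zero

end ExponentialMoments

lemma integral_exp_mul_monomial_mul_eq_zero {μ : Measure (ℝ × ℝ)} {g : ℝ × ℝ → ℝ} {R : ℝ}
    (hR : ∀ᵐ p ∂μ, |p.1| ≤ R ∧ |p.2| ≤ R) (hg : Integrable g μ) {U V : Set ℝ}
    (hU : IsOpen U) (hV : IsOpen V)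
    (h0 : ∀ z ∈ U, ∀ y ∈ V, ∫ p, Real.exp (z * p.1 + y * p.2) * g p ∂μ = 0) (m n : ℕ) :
    ∀ z ∈ U, ∀ y ∈ V, ∫ p, Real.exp (z * p.1 + y * p.2) * (p.1 ^ m * p.2 ^ n * g p) ∂μ = 0 := by
  have h₁ : AEStronglyMeasurable (fun p : ℝ × ℝ => p.1) μ := measurable_fst.aestronglyMeasurable
  have h₂ : AEStronglyMeasurable (fun p : ℝ × ℝ => p.2) μ := measurable_snd.aestronglyMeasurable
  have hR₁ : ∀ᵐ p ∂μ, |p.1| ≤ R := hR.mono fun _ hp => hp.1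
  have hR₂ : ∀ᵐ p ∂μ, |p.2| ≤ R := hR.mono fun _ hp => hp.2
  have hfst : ∀ y ∈ V, ∀ z ∈ U,
      ∫ p, Real.exp (z * p.1) * (p.1 ^ m * (Real.exp (y * p.2) * g p)) ∂μ = 0 := by
    intro y hy
    refine integral_exp_mul_pow_mul_eq_zero h₁ hR₁ (integrable_exp_mul_mul h₂ hR₂ hg y) hU
      (fun z hz => ?_) m
    simpa only [Real.exp_add, mul_assoc] using h0 z hz y hy
  intro z hz y hy
  have hsnd := integral_exp_mul_pow_mul_eq_zero h₂ hR₂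
    (integrable_exp_mul_mul h₁ hR₁ (integrable_pow_mul h₁ hR₁ hg m) z) hV
    (fun y hy => by simpa only [mul_left_comm] using hfst y hy z hz) n y hy
  rw [← hsnd]
  congr 1 with p
  rw [Real.exp_add]
  ring

lemma ContinuousMap.dense_span_monomials {X : Type*} [TopologicalSpace X] [CompactSpace X]
    (u v : C(X, ℝ)) (huv : ∀ x y, u x = u y → v x = v y → x = y) :
    Dense (Submodule.span ℝ (range fun mn : ℕ × ℕ => u ^ mn.1 * v ^ mn.2) : Set C(X, ℝ)) := by
  set monomials := range fun mn : ℕ × ℕ => u ^ mn.1 * v ^ mn.2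
  set A := Algebra.adjoin ℝ {u, v}
  have hA : A.SeparatesPoints := by
    intro x y hxy
    by_contra! h
    exact hxy (huv x y (h _ ⟨u, Algebra.subset_adjoin (by simp), rfl⟩)
      (h _ ⟨v, Algebra.subset_adjoin (by simp), rfl⟩))
  have hclosure : (Submonoid.closure {u, v} : Set C(X, ℝ)) ⊆ monomials := by
    intro f hf
    induction hf using Submonoid.closure_induction with
    | mem f hf =>
      rcases hf with rfl | rfl
      exacts [⟨(1, 0), by simp⟩, ⟨(0, 1), by simp⟩]
    | one => exact ⟨(0, 0), by simp⟩
    | mul f f' _ _ hf hf' =>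
      obtain ⟨⟨m, n⟩, rfl⟩ := hf
      obtain ⟨⟨m', n'⟩, rfl⟩ := hf'
      exact ⟨(m + m', n + n'), by simp only; ring⟩
  have hA_le : (A : Set C(X, ℝ)) ⊆ Submodule.span ℝ monomials := by
    intro f hf
    have : f ∈ Subalgebra.toSubmodule A := hf
    rw [Algebra.adjoin_eq_span] at this
    exact Submodule.span_mono hclosure this
  have hA_dense : Dense (A : Set C(X, ℝ)) := by
    rw [dense_iff_closure_eq, ← Subalgebra.topologicalClosure_coe,
      ContinuousMap.subalgebra_topologicalClosure_eq_top_of_separatesPoints A hA]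
    rfl
  exact hA_dense.mono hA_le

section CompactSpace

variable {X : Type*} [TopologicalSpace X] [CompactSpace X] [MeasurableSpace X]
  [OpensMeasurableSpace X] {ν : Measure X} {G : X → ℝ}

lemma ContinuousMap.integrable_mul (f : C(X, ℝ)) (hG : Integrable G ν) :
    Integrable (fun x => f x * G x) ν :=
  hG.bdd_mul f.continuous.aestronglyMeasurable (Eventually.of_forall f.norm_coe_le_norm)

noncomputable def ContinuousMap.integralMulCLM (hG : Integrable G ν) : C(X, ℝ) →L[ℝ] ℝ :=
  LinearMap.mkContinuous
    { toFun := fun f => ∫ x, f x * G x ∂ν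
      map_add' := fun f f' => by
        simp only [ContinuousMap.add_apply, add_mul]
        exact integral_add (f.integrable_mul hG) (f'.integrable_mul hG)
      map_smul' := fun a f => by
        simp only [ContinuousMap.smul_apply, smul_eq_mul, mul_assoc, integral_const_mul,
          RingHom.id_apply] }
    (∫ x, ‖G x‖ ∂ν) fun f => by
      rw [mul_comm, ← integral_const_mul]
      refine norm_integral_le_of_norm_le (hG.norm.const_mul _) (Eventually.of_forall fun x => ?_)
      rw [norm_mul]
      gcongr
      exact f.norm_coe_le_norm x

lemma integral_mul_eq_zero_of_dense_span (hG : Integrable G ν) {s : Set C(X, ℝ)}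
    (hs : Dense (Submodule.span ℝ s : Set C(X, ℝ))) (h0 : ∀ f ∈ s, ∫ x, f x * G x ∂ν = 0)
    (f : C(X, ℝ)) : ∫ x, f x * G x ∂ν = 0 := by
  have hker : (Submodule.span ℝ s : Set C(X, ℝ)) ⊆ (ContinuousMap.integralMulCLM hG).ker :=
    Submodule.span_le.2 h0
  exact (ContinuousMap.integralMulCLM hG).isClosed_ker.closure_subset_iff.2 hker (hs f)

end CompactSpace

lemma ae_restrict_eq_zero_of_integral_continuousMap_mul_eq_zero {E : Type*}
    [NormedAddCommGroup E] [NormedSpace ℝ E] [FiniteDimensional ℝ E] [MeasurableSpace E]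
    [BorelSpace E] {μ : Measure E} {K : Set E} (hK : MeasurableSet K) {G : E → ℝ}
    (hG : IntegrableOn G K μ)
    (h0 : ∀ f : C(K, ℝ), ∫ x : K, f x * G x ∂(μ.comap Subtype.val) = 0) :
    G =ᵐ[μ.restrict K] 0 :=
  ae_eq_zero_of_integral_contDiff_smul_eq_zero hG.integrable.locallyIntegrable fun φ hφ _ => by
    rw [← integral_subtype_comap hK fun x => φ x • G x]
    exact h0 ⟨fun x => φ x, hφ.continuous.comp continuous_subtype_val⟩

lemma ae_restrict_eq_zero_of_integral_monomial_mul_eq_zero {μ : Measure (ℝ × ℝ)}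
    {K : Set (ℝ × ℝ)} (hKc : IsCompact K) (hK : MeasurableSet K) {G : ℝ × ℝ → ℝ}
    (hG : IntegrableOn G K μ) (h0 : ∀ m n : ℕ, ∫ p in K, p.1 ^ m * p.2 ^ n * G p ∂μ = 0) :
    G =ᵐ[μ.restrict K] 0 := by
  have : CompactSpace K := isCompact_iff_compactSpace.1 hKc
  let u : C(K, ℝ) := ⟨fun p => p.1.1, by fun_prop⟩
  let v : C(K, ℝ) := ⟨fun p => p.1.2, by fun_prop⟩
  refine ae_restrict_eq_zero_of_integral_continuousMap_mul_eq_zero hK hG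
    (integral_mul_eq_zero_of_dense_span ((integrableOn_iff_comap_subtypeVal hK).1 hG)
      (ContinuousMap.dense_span_monomials u v fun p q h₁ h₂ => Subtype.ext (Prod.ext h₁ h₂)) ?_)
  rintro _ ⟨⟨m, n⟩, rfl⟩
  rw [← h0 m n, ← integral_subtype_comap hK]
  rfl

/-- Bierens-type completeness: if an integrable `g` on `[0,1]²` satisfies
`∫ exp(z·t₁ + y·t₂)·g(t₁,t₂) d(t₁,t₂) = 0` for every `(z,y) ∈ (0,1)²`, then
`g = 0` a.e. on `[0,1]²`. -/
theorem stmt5 (g : ℝ × ℝ → ℝ)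
    (hint : IntegrableOn g (Set.Icc (0:ℝ) 1 ×ˢ Set.Icc (0:ℝ) 1)
      (volume : Measure (ℝ × ℝ)))
    (hzero : ∀ z ∈ Set.Ioo (0:ℝ) 1, ∀ y ∈ Set.Ioo (0:ℝ) 1,
      ∫ p in Set.Icc (0:ℝ) 1 ×ˢ Set.Icc (0:ℝ) 1,
        Real.exp (z * p.1 + y * p.2) * g p = 0) :
    g =ᵐ[(volume : Measure (ℝ × ℝ)).restrict (Set.Icc (0:ℝ) 1 ×ˢ Set.Icc (0:ℝ) 1)]
      0 := by
  set K := Icc (0:ℝ) 1 ×ˢ Icc (0:ℝ) 1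
  have hK : MeasurableSet K := measurableSet_Icc.prod measurableSet_Icc
  have hbdd : ∀ᵐ p ∂(volume.restrict K), |p.1| ≤ 1 ∧ |p.2| ≤ 1 := by
    filter_upwards [ae_restrict_mem hK] with p ⟨⟨h₁, h₁'⟩, ⟨h₂, h₂'⟩⟩
    exact ⟨abs_le.2 ⟨by linarith, h₁'⟩, abs_le.2 ⟨by linarith, h₂'⟩⟩
  have hhalf : (2⁻¹ : ℝ) ∈ Ioo 0 1 := by norm_num
  have hmoments := integral_exp_mul_monomial_mul_eq_zero hbdd hint isOpen_Ioo isOpen_Ioo hzero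
  have hG : IntegrableOn (fun p => Real.exp (2⁻¹ * p.1 + 2⁻¹ * p.2) * g p) K := by
    change Integrable _ (volume.restrict K)
    simpa only [Real.exp_add, mul_assoc] using
      integrable_exp_mul_mul (c := Prod.fst) measurable_fst.aestronglyMeasurable
        (hbdd.mono fun _ hp => hp.1)
        (integrable_exp_mul_mul (c := Prod.snd) measurable_snd.aestronglyMeasurable
          (hbdd.mono fun _ hp => hp.2) hint 2⁻¹) 2⁻¹
  have hG0 := ae_restrict_eq_zero_of_integral_monomial_mul_eq_zero
    (isCompact_Icc.prod isCompact_Icc) hK hG fun m n =>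
      (integral_congr_ae (Eventually.of_forall fun p => by ring)).trans
        (hmoments m n _ hhalf _ hhalf)
  filter_upwards [hG0] with p hp
  exact (mul_eq_zero.1 hp).resolve_left (Real.exp_ne_zero _)
end

section
/- Let μ be a probability measure on a measurable space S, let M > 0, and let λ₁, λ₂ : S → ℝ be measurable functions whose pushforward measures under μ are absolutely continuous with respect to Lebesgue measure with densities bounded by M. Let δ = sup_{s∈S} |λ₁(s) − λ₂(s)| and let F_{λ_i}(t) = μ{s : λ_i(s) ≤ t}. Then for every x ∈ S: |F_{λ₁}(λ₁(x)) − F_{λ₂}(λ₂(x))| ≤ 2·M·δ. -/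
open MeasureTheory

theorem key_bound {S : Type*} [MeasurableSpace S] (μ : Measure S)
    (M : ℝ) (hM : 0 < M) (l : S → ℝ) (hl : Measurable l)
    (hd : ∀ A : Set ℝ, MeasurableSet A → μ.map l A ≤ ENNReal.ofReal M * volume A)
    (δ : ℝ) (c : ℝ) :
    μ {s | l s ≤ c + 2 * δ} ≤ μ {s | l s ≤ c} + ENNReal.ofReal (2 * M * δ) := by
  have hsub : {s | l s ≤ c + 2 * δ} ⊆ {s | l s ≤ c} ∪ l ⁻¹' Set.Ioc c (c + 2 * δ) := by
    intro s hs
    by_cases h : l s ≤ c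
    · exact Or.inl h
    · exact Or.inr ⟨lt_of_not_ge h, hs⟩
  calc μ {s | l s ≤ c + 2 * δ}
      ≤ μ ({s | l s ≤ c} ∪ l ⁻¹' Set.Ioc c (c + 2 * δ)) := measure_mono hsub
    _ ≤ μ {s | l s ≤ c} + μ (l ⁻¹' Set.Ioc c (c + 2 * δ)) := measure_union_le _ _
    _ ≤ μ {s | l s ≤ c} + ENNReal.ofReal (2 * M * δ) := by
        gcongr
        have h := hd (Set.Ioc c (c + 2 * δ)) measurableSet_Ioc
        rw [Measure.map_apply hl measurableSet_Ioc] at h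
        refine h.trans ?_
        rw [Real.volume_Ioc, show c + 2 * δ - c = 2 * δ by ring,
          ← ENNReal.ofReal_mul hM.le]
        exact ENNReal.ofReal_le_ofReal (by nlinarith [le_refl (M * (2*δ))])

/-- Stability of composed cdfs: if `λ₁, λ₂` are uniformly `δ`-close and their
pushforward measures have densities bounded by `M`, then the composed cdfs
`F_{λ₁}(λ₁(·))` and `F_{λ₂}(λ₂(·))` are uniformly `2Mδ`-close. -/
theorem stmt11 {S : Type*} [MeasurableSpace S] (μ : Measure S) [IsProbabilityMeasure μ]
    (M : ℝ) (hM : 0 < M) (l₁ l₂ : S → ℝ) (hl₁ : Measurable l₁) (hl₂ : Measurable l₂)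
    (hd₁ : ∀ A : Set ℝ, MeasurableSet A → μ.map l₁ A ≤ ENNReal.ofReal M * volume A)
    (hd₂ : ∀ A : Set ℝ, MeasurableSet A → μ.map l₂ A ≤ ENNReal.ofReal M * volume A)
    (δ : ℝ) (hδ : ∀ s, |l₁ s - l₂ s| ≤ δ) :
    ∀ x : S, |(μ {s | l₁ s ≤ l₁ x}).toReal - (μ {s | l₂ s ≤ l₂ x}).toReal|
      ≤ 2 * M * δ := by
  intro x
  have hδ0 : 0 ≤ δ := le_trans (abs_nonneg _) (hδ x)
  have hab : |l₁ x - l₂ x| ≤ δ := hδ x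
  have habs : ∀ s, l₂ s ≤ l₁ s + δ ∧ l₁ s ≤ l₂ s + δ := by
    intro s
    have := abs_le.mp (hδ s)
    constructor <;> linarith [this.1, this.2]
  have h1 : μ {s | l₁ s ≤ l₁ x} ≤ μ {s | l₂ s ≤ l₂ x} + ENNReal.ofReal (2 * M * δ) := by
    have hsub : {s | l₁ s ≤ l₁ x} ⊆ {s | l₂ s ≤ l₂ x + 2 * δ} := by
      intro s hs
      have h1 := (habs s).1
      have h2 := abs_le.mp hab
      simp only [Set.mem_setOf_eq] at hs ⊢
      linarith [h2.1, h2.2]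
    exact le_trans (measure_mono hsub) (key_bound μ M hM l₂ hl₂ hd₂ δ (l₂ x))
  have h2 : μ {s | l₂ s ≤ l₂ x} ≤ μ {s | l₁ s ≤ l₁ x} + ENNReal.ofReal (2 * M * δ) := by
    have hsub : {s | l₂ s ≤ l₂ x} ⊆ {s | l₁ s ≤ l₁ x + 2 * δ} := by
      intro s hs
      have h1 := (habs s).2
      have h2 := abs_le.mp hab
      simp only [Set.mem_setOf_eq] at hs ⊢
      linarith [h2.1, h2.2]
    exact le_trans (measure_mono hsub) (key_bound μ M hM l₁ hl₁ hd₁ δ (l₁ x))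
  have hfin1 : μ {s | l₁ s ≤ l₁ x} ≠ ⊤ := measure_ne_top μ _
  have hfin2 : μ {s | l₂ s ≤ l₂ x} ≠ ⊤ := measure_ne_top μ _
  have hMδ : (0:ℝ) ≤ 2 * M * δ := by positivity
  rw [abs_sub_le_iff]
  constructor
  · have := ENNReal.toReal_mono (by finiteness) h1
    rw [ENNReal.toReal_add hfin2 ENNReal.ofReal_ne_top, ENNReal.toReal_ofReal hMδ] at this
    linarith
  · have := ENNReal.toReal_mono (by finiteness) h2
    rw [ENNReal.toReal_add hfin1 ENNReal.ofReal_ne_top, ENNReal.toReal_ofReal hMδ] at this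
    linarith
end

section
/- Let K : ℝ → [0,∞) be Lebesgue-integrable with K(x) = 0 for |x| > 1, K(−x) = K(x) for all x ∈ ℝ, and ∫_ℝ K(v) dv = 1. Then for every bandwidth h ∈ (0, 1/2] and every u ∈ [0,1]: (1/h)·∫₀¹ K((v − u)/h) dv ≥ 1/2. -/
open MeasureTheory

/-- Lower bound on the boundary-truncated kernel mass: for a symmetric nonnegative
kernel `K` supported in `[−1,1]` with unit integral, `(1/h)·∫₀¹ K((v−u)/h) dv ≥ 1/2`
for every `h ∈ (0, 1/2]` and `u ∈ [0,1]`. -/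
theorem stmt12 (K : ℝ → ℝ) (hK0 : ∀ x, 0 ≤ K x) (hKint : Integrable K)
    (hKsupp : ∀ x : ℝ, 1 < |x| → K x = 0) (hKsymm : ∀ x, K (-x) = K x)
    (hK1 : ∫ x, K x = 1) :
    ∀ h ∈ Set.Ioc (0:ℝ) (1/2), ∀ u ∈ Set.Icc (0:ℝ) 1,
      1/2 ≤ (1/h) * ∫ v in (0:ℝ)..1, K ((v - u) / h) := by
  intro h hh u hu
  obtain ⟨hh0, hh2⟩ := hh
  obtain ⟨hu0, hu1⟩ := hu
  have hhne : h ≠ 0 := ne_of_gt hh0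
  -- ∫_{-1}^0 K = ∫_0^1 K
  have hsym : ∫ x in (-1:ℝ)..0, K x = ∫ x in (0:ℝ)..1, K x := by
    have : ∫ x in (0:ℝ)..1, K (-x) = ∫ x in (-1:ℝ)..(-0:ℝ), K x :=
      intervalIntegral.integral_comp_neg K
    simp only [hKsymm, neg_zero] at this
    rw [this]
  -- total integral over [-1,1] equals 1
  have htot : ∫ x in (-1:ℝ)..1, K x = 1 := by
    rw [intervalIntegral.integral_of_le (by norm_num : (-1:ℝ) ≤ 1)]
    rw [← integral_Icc_eq_integral_Ioc]
    rw [setIntegral_eq_integral_of_forall_compl_eq_zero]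
    · exact hK1
    · intro x hx
      apply hKsupp
      simp only [Set.mem_Icc, not_and_or, not_le] at hx
      rcases hx with hx | hx
      · rw [abs_of_neg (by linarith)]; linarith
      · rw [abs_of_pos (by linarith)]; linarith
  have hadd : (∫ x in (-1:ℝ)..0, K x) + ∫ x in (0:ℝ)..1, K x = ∫ x in (-1:ℝ)..1, K x :=
    intervalIntegral.integral_add_adjacent_intervals
      (hKint.intervalIntegrable) (hKint.intervalIntegrable)
  have hhalf : ∫ x in (0:ℝ)..1, K x = 1/2 := by linarith
  have hhalf' : ∫ x in (-1:ℝ)..0, K x = 1/2 := by rw [hsym]; exact hhalf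
  -- change of variables
  have hcov : ∫ v in (0:ℝ)..1, K ((v - u) / h)
      = h * ∫ w in (-u/h)..((1-u)/h), K w := by
    have h1 : ∫ v in (0:ℝ)..1, K ((v - u) / h)
        = ∫ x in (0 - u)..(1 - u), K (x / h) :=
      (intervalIntegral.integral_comp_sub_right (a := 0) (b := 1) (fun x => K (x / h)) u)
    rw [h1]
    rw [intervalIntegral.integral_comp_div (a := 0 - u) (b := 1 - u) (c := h) K hhne,
      smul_eq_mul, zero_sub]
  rw [hcov]
  rw [one_div h, inv_mul_cancel_left₀ hhne]
  -- now show 1/2 ≤ ∫ w in (-u/h)..((1-u)/h), K w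
  have hmono : ∀ a b c d : ℝ, a ≤ b → b ≤ c → c ≤ d →
      ∫ x in b..c, K x ≤ ∫ x in a..d, K x := by
    intro a b c d hab hbc hcd
    apply intervalIntegral.integral_mono_interval hab hbc hcd
    · filter_upwards with x using hK0 x
    · exact hKint.intervalIntegrable
  rcases le_or_gt u (1/2) with hcase | hcase
  · -- u ≤ 1/2 : [0,1] ⊆ [-u/h, (1-u)/h]
    have h1 : -u/h ≤ 0 := div_nonpos_of_nonpos_of_nonneg (by linarith) hh0.le
    have h2 : (1:ℝ) ≤ (1-u)/h := by
      rw [le_div_iff₀ hh0]; linarith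
    calc (1:ℝ)/2 = ∫ x in (0:ℝ)..1, K x := hhalf.symm
      _ ≤ ∫ w in (-u/h)..((1-u)/h), K w := hmono _ _ _ _ h1 (by norm_num) h2
  · -- u > 1/2 : [-1,0] ⊆ [-u/h, (1-u)/h]
    have h1 : -u/h ≤ -1 := by
      rw [div_le_iff₀ hh0]; linarith
    have h2 : (0:ℝ) ≤ (1-u)/h := div_nonneg (by linarith) hh0.le
    calc (1:ℝ)/2 = ∫ x in (-1:ℝ)..0, K x := hhalf'.symm
      _ ≤ ∫ w in (-u/h)..((1-u)/h), K w := hmono _ _ _ _ h1 (by norm_num) h2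
end

section
/- Let K : ℝ → [0,∞) be measurable and Lebesgue-integrable with K(x) = 0 for |x| > 1 and ∫_ℝ K = 1, and let g : ℝ → ℝ be twice continuously differentiable with |g″(t)| ≤ B for all t. For u ∈ [0,1] and h ∈ (0,1] define ξ₁(u,h) = (1/h)∫₀¹ K((v − u)/h) dv and ξ₂(u,h) = (1/h)∫₀¹ ((v − u)/h)·K((v − u)/h) dv. Then for every u ∈ [0,1] and h ∈ (0,1]: | (1/h)∫₀¹ K((v − u)/h)·g(v) dv − g(u)·ξ₁(u,h) − h·g′(u)·ξ₂(u,h) | ≤ (B/2)·h². -/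
/-!
Subtracting `g u · ξ₁ + h · g' u · ξ₂` leaves `(1/h) ∫₀¹ K((v - u)/h) R(v) dv`, where `R` is the
first-order Taylor remainder of `g` at `u`. Wherever the weight `K((v - u)/h)` is nonzero we have
`|v - u| ≤ h`, so `|R(v)| ≤ (B/2) h²` by Taylor's theorem with Lagrange remainder; and since
`K ≥ 0`, the weight has mass at most `h ∫ K = h` on `[0, 1]`.
-/

open MeasureTheory Set intervalIntegral

theorem abs_sub_sub_deriv_mul_le_of_abs_deriv_deriv_le {g : ℝ → ℝ} (hg : ContDiff ℝ 2 g)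
    {B : ℝ} (hB : ∀ t, |deriv (deriv g) t| ≤ B) (u v : ℝ) :
    |g v - g u - deriv g u * (v - u)| ≤ B / 2 * (v - u) ^ 2 := by
  rcases eq_or_ne u v with rfl | huv
  · simp
  obtain ⟨w, -, hw⟩ := taylor_mean_remainder_lagrange_iteratedDeriv huv hg.contDiffOn
  have htaylor : taylorWithinEval g 1 (uIcc u v) u v = g u + deriv g u * (v - u) := by
    rw [taylorWithinEval_succ, taylor_within_zero_eval, iteratedDerivWithin_one,
      (hg.differentiable two_ne_zero u).derivWithin (uniqueDiffOn_uIcc huv u left_mem_uIcc)]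
    simp [mul_comm]
  rw [sub_sub, ← htaylor, hw, iteratedDeriv_succ, iteratedDeriv_one, abs_div, abs_mul,
    abs_of_nonneg (sq_nonneg (v - u))]
  norm_num
  linarith [mul_le_mul_of_nonneg_right (hB w) (sq_nonneg (v - u))]

theorem abs_sub_le_of_comp_sub_div_ne_zero {K : ℝ → ℝ} (hKsupp : ∀ x : ℝ, 1 < |x| → K x = 0)
    {u v h : ℝ} (hh : 0 < h) (hv : K ((v - u) / h) ≠ 0) : |v - u| ≤ h := by
  have := not_lt.1 (mt (hKsupp _) hv)
  rwa [abs_div, abs_of_pos hh, div_le_one hh] at this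

theorem integral_comp_sub_div_le_mul_integral {K : ℝ → ℝ} (hK0 : ∀ x, 0 ≤ K x)
    (hKint : Integrable K) {a b : ℝ} (hab : a ≤ b) (u : ℝ) {h : ℝ} (hh : 0 < h) :
    ∫ v in a..b, K ((v - u) / h) ≤ h * ∫ x, K x := by
  simp_rw [sub_div]
  rw [integral_comp_div_sub K hh.ne', smul_eq_mul, integral_of_le (by gcongr)]
  exact mul_le_mul_of_nonneg_left (setIntegral_le_integral hKint (.of_forall hK0)) hh.le

theorem abs_integral_mul_le_of_abs_le {w f : ℝ → ℝ} {a b C : ℝ} (hab : a ≤ b)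
    (hw0 : ∀ v, 0 ≤ w v) (hw : IntervalIntegrable w volume a b)
    (hf : ∀ v, w v ≠ 0 → |f v| ≤ C) :
    |∫ v in a..b, w v * f v| ≤ C * ∫ v in a..b, w v := by
  rw [← intervalIntegral.integral_const_mul, ← Real.norm_eq_abs]
  refine norm_integral_le_of_norm_le hab (.of_forall fun v _ => ?_) (hw.const_mul C)
  rw [Real.norm_eq_abs, abs_mul, abs_of_nonneg (hw0 v), mul_comm C]
  rcases eq_or_ne (w v) 0 with hv | hv
  · simp [hv]
  · exact mul_le_mul_of_nonneg_left (hf v hv) (hw0 v)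

theorem integral_mul_sub_sub_const_mul {w g φ : ℝ → ℝ} {a b : ℝ}
    (hw : IntervalIntegrable w volume a b) (hg : ContinuousOn g (uIcc a b))
    (hφ : ContinuousOn φ (uIcc a b)) (c d : ℝ) :
    ∫ v in a..b, w v * (g v - c - d * φ v) =
      (∫ v in a..b, w v * g v) - c * (∫ v in a..b, w v) - d * ∫ v in a..b, φ v * w v := by
  have hwg := hw.mul_continuousOn hg
  have hφw := hw.continuousOn_mul hφ
  have hsplit : (fun v => w v * (g v - c - d * φ v)) =
      fun v => (w v * g v - c * w v) - d * (φ v * w v) := by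
    ext v; ring
  rw [hsplit, integral_sub (hwg.sub (hw.const_mul c)) (hφw.const_mul d),
    integral_sub hwg (hw.const_mul c), intervalIntegral.integral_const_mul,
    intervalIntegral.integral_const_mul]

theorem stmt15_general (K : ℝ → ℝ) (hK0 : ∀ x, 0 ≤ K x)
    (hKint : Integrable K) (hKsupp : ∀ x : ℝ, 1 < |x| → K x = 0)
    (hK1 : ∫ x, K x = 1)
    (g : ℝ → ℝ) (hg : ContDiff ℝ 2 g) (B : ℝ) (hB : ∀ t, |deriv (deriv g) t| ≤ B) :
    ∀ u ∈ Set.Icc (0:ℝ) 1, ∀ h ∈ Set.Ioc (0:ℝ) 1,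
      |(1/h) * (∫ v in (0:ℝ)..1, K ((v - u) / h) * g v)
          - g u * ((1/h) * ∫ v in (0:ℝ)..1, K ((v - u) / h))
          - h * deriv g u * ((1/h) * ∫ v in (0:ℝ)..1, ((v - u) / h) * K ((v - u) / h))|
        ≤ (B / 2) * h ^ 2 := by
  rintro u - h ⟨hh, -⟩
  have hB0 : 0 ≤ B := (abs_nonneg _).trans (hB 0)
  have hw : IntervalIntegrable (fun v => K ((v - u) / h)) volume 0 1 :=
    ((hKint.comp_div hh.ne').comp_sub_right u).intervalIntegrable
  have hmass : ∫ v in (0:ℝ)..1, K ((v - u) / h) ≤ h := by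
    simpa [hK1] using integral_comp_sub_div_le_mul_integral hK0 hKint zero_le_one u hh
  have hrem (v : ℝ) (hv : K ((v - u) / h) ≠ 0) :
      |g v - g u - h * deriv g u * ((v - u) / h)| ≤ B / 2 * h ^ 2 := by
    have hvu := abs_le.1 (abs_sub_le_of_comp_sub_div_ne_zero hKsupp hh hv)
    calc |g v - g u - h * deriv g u * ((v - u) / h)|
        = |g v - g u - deriv g u * (v - u)| := by field_simp
      _ ≤ B / 2 * (v - u) ^ 2 := abs_sub_sub_deriv_mul_le_of_abs_deriv_deriv_le hg hB u v
      _ ≤ B / 2 * h ^ 2 := by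
        gcongr ?_ * ?_
        exact sq_le_sq' hvu.1 hvu.2
  have hbound := abs_integral_mul_le_of_abs_le zero_le_one (fun v => hK0 _) hw hrem
  rw [integral_mul_sub_sub_const_mul hw hg.continuous.continuousOn
    (by fun_prop : Continuous fun v : ℝ => (v - u) / h).continuousOn] at hbound
  calc _ = |1 / h * ((∫ v in (0:ℝ)..1, K ((v - u) / h) * g v)
          - g u * (∫ v in (0:ℝ)..1, K ((v - u) / h))
          - h * deriv g u * ∫ v in (0:ℝ)..1, ((v - u) / h) * K ((v - u) / h))| := by
        congr 1; ring
    _ ≤ 1 / h * (B / 2 * h ^ 2 * h) := by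
        rw [abs_mul, abs_of_pos (one_div_pos.2 hh)]
        gcongr
        exact hbound.trans (by gcongr)
    _ = B / 2 * h ^ 2 := by field_simp

/-- Second-order boundary-aware bias expansion of kernel smoothing: for a nonnegative
kernel `K` supported in `[−1,1]` with unit integral and a `C²` function `g` with
`|g″| ≤ B`, the smoothed value `(1/h)∫₀¹K((v−u)/h)g(v)dv` equals
`g(u)·ξ₁(u,h) + h·g′(u)·ξ₂(u,h)` up to an error of at most `(B/2)h²`. -/
theorem stmt15 (K : ℝ → ℝ) (hKmeas : Measurable K) (hK0 : ∀ x, 0 ≤ K x)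
    (hKint : Integrable K) (hKsupp : ∀ x : ℝ, 1 < |x| → K x = 0)
    (hK1 : ∫ x, K x = 1)
    (g : ℝ → ℝ) (hg : ContDiff ℝ 2 g) (B : ℝ) (hB : ∀ t, |deriv (deriv g) t| ≤ B) :
    ∀ u ∈ Set.Icc (0:ℝ) 1, ∀ h ∈ Set.Ioc (0:ℝ) 1,
      |(1/h) * (∫ v in (0:ℝ)..1, K ((v - u) / h) * g v)
          - g u * ((1/h) * ∫ v in (0:ℝ)..1, K ((v - u) / h))
          - h * deriv g u * ((1/h) * ∫ v in (0:ℝ)..1, ((v - u) / h) * K ((v - u) / h))|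
        ≤ (B / 2) * h ^ 2 :=
  stmt15_general K hK0 hKint hKsupp hK1 g hg B hB
end
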